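/- Let G be a finite group. Then the intersection of the normalizers of all weakly normal subgroups of G equals the intersection of the normalizers of all Sylow subgroups of G (equivalently, the hypercenter Z_∞(G)). That is, ⋂_{H weakly normal in G} N_G(H) = ⋂_{p prime, P ∈ Syl_p(G)} N_G(P). -/

import Mathlib

/-- The conjugate `H^g = g⁻¹ H g` of a subgroup `H`. -/
def conjSubgroup {G : Type*} [Group G] (g : G) (H : Subgroup G) : Subgroup G :=
  H.map (MulAut.conj g⁻¹).toMonoidHom

/-- `H` is pronormal in `G` if for every `g ∈ G` there exists
`x ∈ ⟨H, H^g⟩` with `H^x = H^g`. -/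
def IsPronormal {G : Type*} [Group G] (H : Subgroup G) : Prop :=
  ∀ g : G, ∃ x ∈ H ⊔ conjSubgroup g H, conjSubgroup x H = conjSubgroup g H

/-- `H` is weakly normal in `G` if `H^g ≤ N_G(H)` implies `g ∈ N_G(H)`. -/
def IsWeaklyNormal {G : Type*} [Group G] (H : Subgroup G) : Prop :=
  ∀ g : G, conjSubgroup g H ≤ Subgroup.normalizer (H : Set G) → g ∈ Subgroup.normalizer (H : Set G)

/-- `H` is an `𝓗`-subgroup of `G` if `N_G(H) ∩ H^g ≤ H` for all `g ∈ G`. -/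
def IsHSubgroup {G : Type*} [Group G] (H : Subgroup G) : Prop :=
  ∀ g : G, Subgroup.normalizer (H : Set G) ⊓ conjSubgroup g H ≤ H

/-- `H` is an `NE`-subgroup of `G` if `H = N_G(H) ∩ H^G`. -/
def IsNESubgroup {G : Type*} [Group G] (H : Subgroup G) : Prop :=
  H = Subgroup.normalizer (H : Set G) ⊓ Subgroup.normalClosure (H : Set G)

/-- A subgroup `H` satisfies the subnormalizer condition in `G` if for every
subgroup `K` of `G` such that `H` is a normal subgroup of `K`, one has
`N_G(K) ≤ N_G(H)`. -/
def SubnormalizerCondition {G : Type*} [Group G] (H : Subgroup G) : Prop :=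
  ∀ K : Subgroup G, H ≤ K → (H.subgroupOf K).Normal → Subgroup.normalizer (K : Set G) ≤ Subgroup.normalizer (H : Set G)

/-!
Sylow subgroups are weakly normal: a conjugate `P^g` normalizing `P` is a `p`-subgroup of
`N_G(P)`, hence lies in `P`, so `P^g = P`.

Conversely, a weakly normal `H` is normalized by every term `Z_n` of the upper central series:
`Z_{n+1}` normalizes `H Z_n`, so each `x ∈ H Z_{n+1}` conjugates `H` into `H Z_n ≤ N_G(H)`,
and weak normality gives `x ∈ N_G(H)`. It remains to place every element of
`S = ⋂ N_G(P)` in some `Z_n` (one half of Baer's theorem), and it suffices to do so for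
`p`-elements `g`. Such a `g` lies in the normal `p`-subgroup `N = S ∩ core_G(P)`. A Sylow
`q`-subgroup `Q` with `q ≠ p` and `N` normalize each other and meet trivially, so they commute;
hence `G = P C_G(N)`, and then the nilpotency of `P` puts `N` inside some `Z_n`.
-/

open Subgroup
open scoped commutatorElement Pointwise

section

variable {G : Type*} [Group G]

theorem mem_conjSubgroup_iff {g x : G} {H : Subgroup G} :
    x ∈ conjSubgroup g H ↔ g * x * g⁻¹ ∈ H := by
  simp only [conjSubgroup, mem_map, MulEquiv.coe_toMonoidHom, MulAut.conj_apply, inv_inv]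
  constructor
  · rintro ⟨h, hh, rfl⟩
    simpa [mul_assoc] using hh
  · exact fun hx => ⟨g * x * g⁻¹, hx, by group⟩

theorem conjSubgroup_le_of_mem_normalizer {g : G} {H K : Subgroup G}
    (hg : g ∈ normalizer (K : Set G)) (hHK : H ≤ K) : conjSubgroup g H ≤ K := fun x hx =>
  (mem_normalizer_iff.mp hg x).mpr (hHK (mem_conjSubgroup_iff.mp hx))

theorem IsPGroup.le_of_le_normalizer_sylow {p : ℕ} {K : Subgroup G} (hK : IsPGroup p K)
    {P : Sylow p G} (hKP : K ≤ normalizer ((P : Subgroup G) : Set G)) : K ≤ P := by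
  have h : K ⊓ normalizer ((P : Subgroup G) : Set G) = K ⊓ P := hK.inf_normalizer_sylow P
  rw [inf_eq_left.mpr hKP] at h
  exact h ▸ inf_le_right

theorem Sylow.mem_of_orderOf_eq_pow_of_mem_normalizer {p k : ℕ} (P : Sylow p G) {g : G}
    (hgp : orderOf g = p ^ k) (hgP : g ∈ normalizer ((P : Subgroup G) : Set G)) :
    g ∈ (P : Subgroup G) :=
  (IsPGroup.of_card (by rw [Nat.card_zpowers, hgp])).le_of_le_normalizer_sylow
    (zpowers_le.mpr hgP) (mem_zpowers g)

theorem Sylow.isWeaklyNormal {p : ℕ} (P : Sylow p G) : IsWeaklyNormal (P : Subgroup G) := by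
  intro g hg
  have hle : ((g⁻¹ • P : Sylow p G) : Subgroup G) ≤ P :=
    (g⁻¹ • P).isPGroup'.le_of_le_normalizer_sylow hg
  have hfix : g⁻¹ • P = P := Sylow.ext ((g⁻¹ • P).is_maximal' P.isPGroup' hle).symm
  simpa using Sylow.smul_eq_iff_mem_normalizer.mp hfix

theorem commutatorElement_mul_right_of_commute {a u c : G} (h : Commute a c) :
    ⁅a, u * c⁆ = ⁅a, u⁆ := by
  simp only [commutatorElement_def, mul_inv_rev, mul_assoc, h.inv_left.symm.left_comm,
    mul_inv_cancel_left]

namespace Subgroup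

theorem le_centralizer_of_le_normalizer_of_disjoint {N Q : Subgroup G} [N.Normal]
    (hNQ : N ≤ normalizer (Q : Set G)) (hQN : Disjoint Q N) : Q ≤ centralizer (N : Set G) :=
  commutator_eq_bot_iff_le_centralizer.mp <| le_bot_iff.mp <|
    (le_inf (le_normalizer_iff_commutator_le_left.mp hNQ) (commutator_le_right Q N)).trans
      hQN.le_bot

theorem eq_top_of_forall_exists_sylow_le [Finite G] {K : Subgroup G}
    (hK : ∀ p : ℕ, p.Prime → ∃ P : Sylow p G, (P : Subgroup G) ≤ K) : K = ⊤ := by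
  rw [← index_eq_one]
  by_contra hne
  obtain ⟨p, hp, hpK⟩ := Nat.exists_prime_and_dvd hne
  have := Fact.mk hp
  obtain ⟨P, hPK⟩ := hK p hp
  exact P.not_dvd_index (hpK.trans (index_dvd_of_le hPK))

theorem exists_le_upperCentralSeries_of_sup_centralizer_eq_top {N K : Subgroup G}
    [N.Normal] [Group.IsNilpotent K] (hNK : N ≤ K) (hKN : K ⊔ centralizer (N : Set G) = ⊤) :
    ∃ n, N ≤ upperCentralSeries G n := by
  have hlift : ∀ i (a : K), (a : G) ∈ N → a ∈ upperCentralSeries K i →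
      (a : G) ∈ upperCentralSeries G i := by
    intro i
    induction i with
    | zero =>
      intro a _ ha
      simp_all
    | succ i ih =>
      intro a haN ha
      refine mem_upperCentralSeries_succ_iff.mpr fun y => ?_
      obtain ⟨u, hu, c, hc, rfl⟩ : y ∈ (K : Set G) * (centralizer (N : Set G) : Set G) := by
        rw [← mul_normal, hKN]
        trivial
      change ⁅(a : G), u * c⁆ ∈ _
      rw [commutatorElement_mul_right_of_commute (mem_centralizer_iff.mp hc _ haN)]
      exact ih ⁅a, ⟨u, hu⟩⁆
        (commutator_le_left N ⊤ (commutator_mem_commutator haN (mem_top u)))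
        (mem_upperCentralSeries_succ_iff.mp ha ⟨u, hu⟩)
  obtain ⟨n, hn⟩ := Group.IsNilpotent.nilpotent' (G := K)
  exact ⟨n, fun a ha => hlift n ⟨a, hNK ha⟩ ha (hn ▸ mem_top _)⟩

theorem upperCentralSeries_succ_le_normalizer_sup (H : Subgroup G) (n : ℕ) :
    upperCentralSeries G (n + 1) ≤
      normalizer ((H ⊔ upperCentralSeries G n : Subgroup G) : Set G) := by
  change upperCentralSeriesStep (upperCentralSeries G n) ≤ _
  rw [upperCentralSeriesStep_eq_comap_center, sup_comm, ← QuotientGroup.comap_map_mk']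
  exact (comap_mono (center_le_normalizer _)).trans (le_normalizer_comap _)

theorem le_of_forall_orderOf_eq_prime_pow_mem {S T : Subgroup G}
    (hS : ∀ g ∈ S, IsOfFinOrder g)
    (hST : ∀ g ∈ S, ∀ p k : ℕ, p.Prime → orderOf g = p ^ k → g ∈ T) : S ≤ T := by
  intro g hg
  induction hn : orderOf g using Nat.strong_induction_on generalizing g with
  | _ n ih =>
  have hn0 : n ≠ 0 := hn ▸ (hS g hg).orderOf_pos.ne'
  by_cases hn1 : n = 1
  · exact orderOf_eq_one_iff.mp (hn.trans hn1) ▸ one_mem T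
  set p := n.minFac
  have hp : p.Prime := Nat.minFac_prime hn1
  set a := p ^ n.factorization p
  set b := n / a
  have hab : a * b = n := Nat.ordProj_mul_ordCompl_eq_self n p
  by_cases hb1 : b = 1
  · exact hST g hg p _ hp (by rw [hn, ← hab, hb1, mul_one])
  have ha1 : 1 < a :=
    Nat.one_lt_pow (hp.factorization_pos_of_dvd hn0 (Nat.minFac_dvd n)).ne' hp.one_lt
  have hb0 : 0 < b := Nat.pos_of_ne_zero fun hb0 => hn0 (by rw [← hab, hb0, mul_zero])
  have hga : g ^ a ∈ T := ih b (hab ▸ lt_mul_of_one_lt_left hb0 ha1) (pow_mem hg a)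
    (by rw [orderOf_pow_of_dvd (by omega) (hn ▸ Dvd.intro b hab), hn])
  have hgb : g ^ b ∈ T := ih a (hab ▸ lt_mul_of_one_lt_right (by omega) (by omega))
    (pow_mem hg b) (by rw [orderOf_pow_of_dvd hb0.ne' (hn ▸ Dvd.intro_left a hab), hn, ← hab,
      Nat.mul_div_cancel _ hb0])
  obtain ⟨u, v, huv⟩ := Nat.isCoprime_iff_coprime.mpr ((Nat.coprime_ordCompl hp hn0).pow_left _)
  have hg : g = (g ^ a) ^ u * (g ^ b) ^ v := by
    rw [← zpow_natCast, ← zpow_natCast, ← zpow_mul, ← zpow_mul, ← zpow_add, mul_comm (a : ℤ),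
      mul_comm (b : ℤ), huv, zpow_one]
  rw [hg]
  exact mul_mem (zpow_mem hga u) (zpow_mem hgb v)

end Subgroup

theorem IsWeaklyNormal.upperCentralSeries_le_normalizer {H : Subgroup G} (hH : IsWeaklyNormal H)
    (n : ℕ) : Subgroup.upperCentralSeries G n ≤ normalizer (H : Set G) := by
  suffices ∀ n, H ⊔ Subgroup.upperCentralSeries G n ≤ normalizer (H : Set G) from
    le_sup_right.trans (this n)
  intro n
  induction n with
  | zero => simpa using le_normalizer
  | succ n ih =>
    intro x hx
    have hxn : x ∈ normalizer ((H ⊔ Subgroup.upperCentralSeries G n : Subgroup G) : Set G) :=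
      sup_le (le_sup_left.trans le_normalizer) (upperCentralSeries_succ_le_normalizer_sup H n) hx
    exact hH x ((conjSubgroup_le_of_mem_normalizer hxn le_sup_left).trans ih)

variable (G) in
def iInfNormalizerSylow : Subgroup G :=
  ⨅ (p : ℕ) (_ : p.Prime) (P : Sylow p G), normalizer ((P : Subgroup G) : Set G)

theorem mem_iInfNormalizerSylow {g : G} : g ∈ iInfNormalizerSylow G ↔
    ∀ p : ℕ, p.Prime → ∀ P : Sylow p G, g ∈ normalizer ((P : Subgroup G) : Set G) := by
  simp only [iInfNormalizerSylow, mem_iInf]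

theorem iInfNormalizerSylow_le_normalizer {p : ℕ} (hp : p.Prime) (P : Sylow p G) :
    iInfNormalizerSylow G ≤ normalizer ((P : Subgroup G) : Set G) :=
  fun _ hg => mem_iInfNormalizerSylow.mp hg p hp P

instance iInfNormalizerSylow_normal : (iInfNormalizerSylow G).Normal where
  conj_mem g hg x := mem_iInfNormalizerSylow.mpr fun p hp P =>
    Sylow.smul_eq_iff_mem_normalizer.mp <| by
      rw [mul_smul, mul_smul,
        Sylow.smul_eq_iff_mem_normalizer.mpr (mem_iInfNormalizerSylow.mp hg p hp (x⁻¹ • P)),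
        smul_inv_smul]

theorem mem_normalCore_of_mem_iInfNormalizerSylow {p k : ℕ} (hp : p.Prime) {g : G}
    (hg : g ∈ iInfNormalizerSylow G) (hgp : orderOf g = p ^ k) (P : Sylow p G) :
    g ∈ (P : Subgroup G).normalCore := fun x =>
  P.mem_of_orderOf_eq_pow_of_mem_normalizer
    (by rw [← (SemiconjBy.conj_mk x g).orderOf_eq, hgp])
    (iInfNormalizerSylow_le_normalizer hp P (iInfNormalizerSylow_normal.conj_mem g hg x))

theorem exists_mem_upperCentralSeries_of_mem_iInfNormalizerSylow [Finite G] {p k : ℕ}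
    (hp : p.Prime) {g : G} (hg : g ∈ iInfNormalizerSylow G) (hgp : orderOf g = p ^ k) :
    ∃ n, g ∈ Subgroup.upperCentralSeries G n := by
  have := Fact.mk hp
  obtain ⟨P⟩ : Nonempty (Sylow p G) := inferInstance
  set N := iInfNormalizerSylow G ⊓ (P : Subgroup G).normalCore
  have hNP : N ≤ P := inf_le_right.trans (normalCore_le _)
  have hC : (P : Subgroup G) ⊔ centralizer (N : Set G) = ⊤ :=
    eq_top_of_forall_exists_sylow_le fun q hq => by
      have := Fact.mk hq
      obtain ⟨Q⟩ : Nonempty (Sylow q G) := inferInstance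
      rcases eq_or_ne q p with rfl | hqp
      · exact ⟨P, le_sup_left⟩
      · exact ⟨Q, le_sup_of_le_right <| le_centralizer_of_le_normalizer_of_disjoint
          (inf_le_left.trans (iInfNormalizerSylow_le_normalizer hq Q))
          (IsPGroup.disjoint_of_ne q p hqp _ _ Q.isPGroup' (P.isPGroup'.to_le hNP))⟩
  have := P.isPGroup'.isNilpotent
  obtain ⟨n, hn⟩ := exists_le_upperCentralSeries_of_sup_centralizer_eq_top hNP hC
  exact ⟨n, hn ⟨hg, mem_normalCore_of_mem_iInfNormalizerSylow hp hg hgp P⟩⟩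

end

theorem iInf_normalizer_weaklyNormal_eq_iInf_normalizer_sylow
    (G : Type*) [Group G] [Finite G] :
    (⨅ (H : Subgroup G) (_ : IsWeaklyNormal H), Subgroup.normalizer (H : Set G)) =
      ⨅ (p : ℕ) (_ : p.Prime) (P : Sylow p G), Subgroup.normalizer ((P : Subgroup G) : Set G) := by
  refine le_antisymm (le_iInf₂ fun p _ => le_iInf fun P => iInf₂_le _ P.isWeaklyNormal) ?_
  change iInfNormalizerSylow G ≤ _
  refine le_iInf₂ fun H hH => le_of_forall_orderOf_eq_prime_pow_mem
    (fun g _ => isOfFinOrder_of_finite g) fun g hg p k hp hgp => ?_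
  obtain ⟨n, hn⟩ := exists_mem_upperCentralSeries_of_mem_iInfNormalizerSylow hp hg hgp
  exact hH.upperCentralSeries_le_normalizer n hn
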